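/- arXiv:2411.18419 — 6 statements merged into one kernel-verified Lean document; each statement's English description precedes it below -/
import Mathlib

section
/- For every positive integer N, the number of distinct prime divisors satisfies 2^{ω(N)} ≤ 4.862 · N^{1/4}. -/
/-!
Since the primes dividing `N` have product at most `N`,
`16 ^ ω(N) / N ≤ ∏_{p ∣ N} 16 / p`. Every factor with `p ≥ 16` is at most `1`, and every
prime `p < 16` contributes a factor at least `1`, so the product is at most
`∏_{p < 16} 16 / p = 16⁶ / 30030 < 4.862⁴`. Taking fourth roots gives the bound.
-/

open Finset Nat

theorem Finset.prod_le_prod_of_le_one_of_one_le {ι R : Type*} [CommMonoidWithZero R] [Preorder R]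
    [ZeroLEOneClass R] [PosMulMono R] {f : ι → R} {s t : Finset ι}
    (hf0 : ∀ i ∈ s, 0 ≤ f i) (hs : ∀ i ∈ s, i ∉ t → f i ≤ 1) (ht : ∀ i ∈ t, i ∉ s → 1 ≤ f i) :
    ∏ i ∈ s, f i ≤ ∏ i ∈ t, f i := by
  classical
  calc ∏ i ∈ s, f i
      ≤ ∏ i ∈ s ∩ t, f i :=
        prod_le_prod_of_subset_of_le_one inter_subset_left hf0 fun i hi hit ↦
          hs i hi fun h ↦ hit (mem_inter.2 ⟨hi, h⟩)
    _ ≤ ∏ i ∈ t, f i :=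
        prod_le_prod_of_subset_of_one_le inter_subset_right
          (fun i hi ↦ hf0 i (mem_inter.1 hi).1) fun i hi hist ↦
          ht i hi fun h ↦ hist (mem_inter.2 ⟨h, hi⟩)

theorem Nat.prod_primeFactors_div_le_prod_primesBelow {c : ℝ} (hc : 0 ≤ c) (N : ℕ) :
    ∏ p ∈ N.primeFactors, c / p ≤ ∏ p ∈ primesBelow ⌈c⌉₊, c / p := by
  refine prod_le_prod_of_le_one_of_one_le (fun p _ ↦ by positivity) (fun p hp hpc ↦ ?_)
    fun p hp _ ↦ ?_
  · have hc_le : c ≤ p :=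
      ceil_le.1 (not_lt.1 fun h ↦ hpc (mem_primesBelow.2 ⟨h, prime_of_mem_primeFactors hp⟩))
    exact div_le_one_of_le₀ hc_le (cast_nonneg p)
  · have hp_pos : (0 : ℝ) < p := cast_pos.2 (prime_of_mem_primesBelow hp).pos
    have hp_lt : (p : ℝ) < c := lt_ceil.1 (lt_of_mem_primesBelow hp)
    exact (one_le_div hp_pos).2 hp_lt.le

theorem Nat.pow_card_primeFactors_le {c : ℝ} (hc : 0 ≤ c) {N : ℕ} (hN : N ≠ 0) :
    c ^ N.primeFactors.card ≤ (∏ p ∈ primesBelow ⌈c⌉₊, c / p) * N := by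
  have hprod_le : ∏ p ∈ N.primeFactors, (p : ℝ) ≤ N := by
    rw [← cast_prod]
    exact cast_le.2 (le_of_dvd (pos_of_ne_zero hN) (prod_primeFactors_dvd N))
  calc c ^ N.primeFactors.card
      = (∏ p ∈ N.primeFactors, c / p) * ∏ p ∈ N.primeFactors, (p : ℝ) := by
        rw [← prod_mul_distrib, ← prod_const]
        refine prod_congr rfl fun p hp ↦ (div_mul_cancel₀ c ?_).symm
        exact cast_ne_zero.2 (prime_of_mem_primeFactors hp).ne_zero
    _ ≤ (∏ p ∈ primesBelow ⌈c⌉₊, c / p) * N :=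
        mul_le_mul (prod_primeFactors_div_le_prod_primesBelow hc N) hprod_le
          (prod_nonneg fun p _ ↦ cast_nonneg p) (prod_nonneg fun p _ ↦ by positivity)

theorem prod_primesBelow_sixteen_div :
    ∏ p ∈ primesBelow ⌈(16 : ℝ)⌉₊, (16 : ℝ) / p = 16 ^ 6 / 30030 := by
  have hprimes : primesBelow 16 = {2, 3, 5, 7, 11, 13} := by decide
  rw [show ⌈(16 : ℝ)⌉₊ = 16 by norm_num, hprimes]
  norm_num

theorem two_pow_omega_le (N : ℕ) (hN : 1 ≤ N) :
    (2 : ℝ) ^ N.primeFactors.card ≤ 4.862 * (N : ℝ) ^ ((1 : ℝ) / 4) := by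
  have h16 : (16 : ℝ) ^ N.primeFactors.card ≤ 4.862 ^ 4 * N := by
    refine (pow_card_primeFactors_le (by norm_num) (one_le_iff_ne_zero.1 hN)).trans ?_
    rw [prod_primesBelow_sixteen_div]
    gcongr
    norm_num
  refine (pow_le_pow_iff_left₀ (by positivity) (by positivity) four_ne_zero).1 ?_
  calc ((2 : ℝ) ^ N.primeFactors.card) ^ 4 = 16 ^ N.primeFactors.card := by
        rw [← pow_mul, mul_comm, pow_mul]
        norm_num
    _ ≤ 4.862 ^ 4 * N := h16
    _ = (4.862 * (N : ℝ) ^ ((1 : ℝ) / 4)) ^ 4 := by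
        rw [mul_pow, ← Real.rpow_natCast ((N : ℝ) ^ _) 4, ← Real.rpow_mul (cast_nonneg N)]
        norm_num
end

section
/- For every positive integer N, the number of divisors satisfies σ_0(N) ≤ 8.447 · N^{1/4}. -/
/-!
Writing `N = ∏ p ^ aₚ`, we have `σ₀(N) ^ 4 / N = ∏ (aₚ + 1) ^ 4 / p ^ aₚ`. For each prime `p` the
factor `(a + 1) ^ 4 / p ^ a` is bounded over all `a`, by `1` as soon as `p ≥ 16`; the product of
the maxima over the primes `p ≤ 13` is `127401984 / 25025 < 8.447 ^ 4`.
-/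

open Finset

/-- Since `((a + 2) / (a + 1)) ^ k` decreases in `a`, the inductive step only has to be checked
at `a = A`. -/
lemma mul_add_one_pow_le_mul_pow {p k C D A : ℕ} (hbase : ∀ a ≤ A, D * (a + 1) ^ k ≤ C * p ^ a)
    (hstep : (A + 2) ^ k ≤ p * (A + 1) ^ k) (a : ℕ) : D * (a + 1) ^ k ≤ C * p ^ a := by
  induction a with
  | zero => exact hbase 0 A.zero_le
  | succ a ih =>
    rcases le_or_gt (a + 1) A with h | h
    · exact hbase _ h
    have hratio : (a + 2) ^ k ≤ p * (a + 1) ^ k := by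
      refine Nat.le_of_mul_le_mul_right ?_ (by positivity : 0 < (A + 1) ^ k)
      calc (a + 2) ^ k * (A + 1) ^ k ≤ (A + 2) ^ k * (a + 1) ^ k := by
            rw [← mul_pow, ← mul_pow]
            exact Nat.pow_le_pow_left (by nlinarith) k
        _ ≤ p * (A + 1) ^ k * (a + 1) ^ k := Nat.mul_le_mul_right _ hstep
        _ = p * (a + 1) ^ k * (A + 1) ^ k := by ring
    calc D * (a + 1 + 1) ^ k ≤ D * (p * (a + 1) ^ k) := Nat.mul_le_mul_left _ hratio
      _ = p * (D * (a + 1) ^ k) := by ring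
      _ ≤ p * (C * p ^ a) := Nat.mul_le_mul_left _ ih
      _ = C * p ^ (a + 1) := by ring

lemma add_one_pow_le_div_mul_pow {p k C D A : ℕ} (a : ℕ) (hD : 0 < D)
    (hbase : ∀ a ≤ A, D * (a + 1) ^ k ≤ C * p ^ a) (hstep : (A + 2) ^ k ≤ p * (A + 1) ^ k) :
    ((a : ℝ) + 1) ^ k ≤ (C / D : ℝ) * p ^ a := by
  rw [div_mul_eq_mul_div, le_div_iff₀ (by exact_mod_cast hD), mul_comm]
  exact_mod_cast mul_add_one_pow_le_mul_pow hbase hstep a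

/-- For a prime `p`, `divisorConst p = max_a (a + 1) ^ 4 / p ^ a`, attained at `a = 5, 3, 2, 1`
for `p = 2, 3, 5` and `7 ≤ p ≤ 13`, and at `a = 0` for `p ≥ 17`. -/
noncomputable def divisorConst (p : ℕ) : ℝ :=
  if p = 2 then 81 / 2 else if p = 3 then 256 / 27 else if p = 5 then 81 / 25
  else if p = 7 ∨ p = 11 ∨ p = 13 then 16 / p else 1

lemma one_le_divisorConst (p : ℕ) : 1 ≤ divisorConst p := by
  unfold divisorConst
  split_ifs with h2 h3 h5 h7 <;> try norm_num
  rcases h7 with rfl | rfl | rfl <;> norm_num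

lemma divisorConst_eq_one {p : ℕ} (hp : p ∉ ({2, 3, 5, 7, 11, 13} : Finset ℕ)) :
    divisorConst p = 1 := by
  simp only [mem_insert, mem_singleton, not_or] at hp
  simp [divisorConst, hp]

lemma add_one_pow_four_le_divisorConst_mul {p : ℕ} (hp : p.Prime) (a : ℕ) :
    ((a : ℝ) + 1) ^ 4 ≤ divisorConst p * p ^ a := by
  by_cases hsmall : p ∈ ({2, 3, 5, 7, 11, 13} : Finset ℕ)
  · simp only [mem_insert, mem_singleton] at hsmall
    rcases hsmall with rfl | rfl | rfl | rfl | rfl | rfl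
    · simpa [divisorConst] using add_one_pow_le_div_mul_pow (p := 2) (C := 81) (A := 5) a
        two_pos (by decide) (by norm_num)
    · simpa [divisorConst] using add_one_pow_le_div_mul_pow (p := 3) (C := 256) (D := 27)
        (A := 3) a (by norm_num) (by decide) (by norm_num)
    · simpa [divisorConst] using add_one_pow_le_div_mul_pow (p := 5) (C := 81) (D := 25)
        (A := 2) a (by norm_num) (by decide) (by norm_num)
    · simpa [divisorConst] using add_one_pow_le_div_mul_pow (p := 7) (C := 16) (D := 7)
        (A := 1) a (by norm_num) (by decide) (by norm_num)
    · simpa [divisorConst] using add_one_pow_le_div_mul_pow (p := 11) (C := 16) (D := 11)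
        (A := 1) a (by norm_num) (by decide) (by norm_num)
    · simpa [divisorConst] using add_one_pow_le_div_mul_pow (p := 13) (C := 16) (D := 13)
        (A := 1) a (by norm_num) (by decide) (by norm_num)
  · have h16 : 16 ≤ p := by
      by_contra! h
      interval_cases p <;> norm_num at *
    simpa [divisorConst_eq_one hsmall] using
      add_one_pow_le_div_mul_pow (C := 1) (A := 0) a one_pos (by simp) (by simpa using h16)

lemma prod_divisorConst_le (s : Finset ℕ) : ∏ p ∈ s, divisorConst p ≤ 127401984 / 25025 := by
  let T : Finset ℕ := {2, 3, 5, 7, 11, 13}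
  calc ∏ p ∈ s, divisorConst p ≤ ∏ p ∈ s ∪ T, divisorConst p :=
        prod_le_prod_of_subset_of_one_le subset_union_left
          (fun p _ ↦ zero_le_one.trans (one_le_divisorConst p)) (fun p _ _ ↦ one_le_divisorConst p)
    _ = ∏ p ∈ T, divisorConst p :=
        (prod_subset subset_union_right fun _ _ hp ↦ divisorConst_eq_one hp).symm
    _ = 127401984 / 25025 := by simp [T, divisorConst]; norm_num

lemma card_divisors_pow_le_prod_mul {N k : ℕ} (hN : N ≠ 0) (g : ℕ → ℝ)
    (hg : ∀ p, p.Prime → ∀ a : ℕ, ((a : ℝ) + 1) ^ k ≤ g p * p ^ a) :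
    (#N.divisors : ℝ) ^ k ≤ (∏ p ∈ N.primeFactors, g p) * N := by
  have hNprod : (N : ℝ) = ∏ p ∈ N.primeFactors, (p : ℝ) ^ N.factorization p := by
    exact_mod_cast Nat.prod_primeFactors_pow_factorization hN
  rw [Nat.card_divisors hN, hNprod]
  push_cast
  rw [← prod_pow, ← prod_mul_distrib]
  exact prod_le_prod (fun _ _ ↦ by positivity)
    fun p hp ↦ hg p (Nat.prime_of_mem_primeFactors hp) _

lemma card_divisors_pow_four_le (N : ℕ) : (#N.divisors : ℝ) ^ 4 ≤ 127401984 / 25025 * N := by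
  rcases eq_or_ne N 0 with rfl | hN
  · simp
  calc (#N.divisors : ℝ) ^ 4 ≤ (∏ p ∈ N.primeFactors, divisorConst p) * N :=
        card_divisors_pow_le_prod_mul hN _ fun _ hp ↦ add_one_pow_four_le_divisorConst_mul hp
    _ ≤ 127401984 / 25025 * N := by gcongr; exact prod_divisorConst_le _

theorem sigma_zero_le_general (N : ℕ) :
    (N.divisors.card : ℝ) ≤ 8.447 * (N : ℝ) ^ ((1 : ℝ) / 4) := by
  have hroot : ((N : ℝ) ^ ((1 : ℝ) / 4)) ^ 4 = N := by
    simpa using Real.rpow_inv_natCast_pow (N.cast_nonneg (α := ℝ)) four_ne_zero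
  refine le_of_pow_le_pow_left₀ four_ne_zero (by positivity) ?_
  calc (#N.divisors : ℝ) ^ 4 ≤ 127401984 / 25025 * N := card_divisors_pow_four_le N
    _ ≤ 8.447 ^ 4 * N := by gcongr; norm_num
    _ = (8.447 * (N : ℝ) ^ ((1 : ℝ) / 4)) ^ 4 := by rw [mul_pow, hroot]

theorem sigma_zero_le (N : ℕ) (hN : 1 ≤ N) :
    (N.divisors.card : ℝ) ≤ 8.447 * (N : ℝ) ^ ((1 : ℝ) / 4) :=
  sigma_zero_le_general N
end

section
/- For every positive integer N, Σ_{d | N} φ(gcd(d, N/d)) ≤ 2^{ω(N)} · √N. -/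
/-!
Write the sum as `f N` for the arithmetic function `f n = ∑_{d ∣ n} φ(gcd(d, n/d))`. It is
multiplicative: a divisor of `mn` with `m, n` coprime splits uniquely as `ab` with `a ∣ m`,
`b ∣ n`, and then `gcd(ab, mn/(ab)) = gcd(a, m/a) · gcd(b, n/b)`. On a prime power,
`gcd(p^i, p^(k-i)) = p^min(i, k-i)`; each value of `min(i, k-i)` up to `⌊k/2⌋` occurs at most
twice, so `f(p^k) ≤ 2 ∑_{i ≤ k/2} φ(p^i) = 2 p^⌊k/2⌋ ≤ 2 √(p^k)`. Multiplying over the prime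
powers exactly dividing `N` gives the bound.
-/

open Finset ArithmeticFunction
open scoped Nat

theorem Finset.sum_range_min_sub_le {M : Type*} [AddCommMonoid M] [PartialOrder M]
    [CanonicallyOrderedAdd M] (g : ℕ → M) (k : ℕ) :
    ∑ i ∈ range (k + 1), g (min i (k - i)) ≤ 2 • ∑ i ∈ range (k / 2 + 1), g i := by
  calc ∑ i ∈ range (k + 1), g (min i (k - i))
      = ∑ i ∈ range (k / 2 + 1), g (min i (k - i))
          + ∑ j ∈ range (k - k / 2), g (min (k / 2 + 1 + j) (k - (k / 2 + 1 + j))) := by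
        rw [← sum_range_add]
        congr 2
        omega
    _ = ∑ i ∈ range (k / 2 + 1), g i + ∑ j ∈ range (k - k / 2), g (k - k / 2 - 1 - j) := by
        congr 1
        · exact sum_congr rfl fun i hi => congrArg g (by rw [mem_range] at hi; omega)
        · exact sum_congr rfl fun j hj => congrArg g (by rw [mem_range] at hj; omega)
    _ = ∑ i ∈ range (k / 2 + 1), g i + ∑ j ∈ range (k - k / 2), g j := by
        rw [sum_range_reflect]
    _ ≤ 2 • ∑ i ∈ range (k / 2 + 1), g i := by
        rw [two_nsmul]
        exact add_le_add le_rfl (sum_le_sum_of_subset (range_mono (by omega)))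

theorem Real.pow_div_two_le_sqrt_pow {x : ℝ} (hx : 1 ≤ x) (k : ℕ) : x ^ (k / 2) ≤ √(x ^ k) := by
  rw [Real.le_sqrt (by positivity) (by positivity), ← pow_mul]
  exact pow_le_pow_right₀ hx (Nat.div_mul_le_self k 2)

theorem Nat.gcd_mul_mul_of_coprime {a b c d : ℕ} (h : Coprime (a * c) (b * d)) :
    gcd (a * b) (c * d) = gcd a c * gcd b d := by
  have hcd : Coprime c d := h.coprime_mul_left.coprime_mul_left_right
  have hbc : Coprime b c := (h.coprime_mul_left.coprime_mul_right_right).symm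
  have had : Coprime a d := h.coprime_mul_right.coprime_mul_left_right
  rw [hcd.gcd_mul, hbc.gcd_mul_right_cancel, had.gcd_mul_left_cancel]

theorem Nat.gcd_pow_pow (p i j : ℕ) : gcd (p ^ i) (p ^ j) = p ^ min i j := by
  rcases le_total i j with h | h
  · rw [gcd_eq_left (pow_dvd_pow p h), min_eq_left h]
  · rw [gcd_eq_right (pow_dvd_pow p h), min_eq_right h]

theorem ArithmeticFunction.IsMultiplicative.cast_le_pow_card_primeFactors_mul_sqrt
    {f : ArithmeticFunction ℕ} (hf : f.IsMultiplicative) {C : ℝ}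
    (h : ∀ p k, p.Prime → k ≠ 0 → (f (p ^ k) : ℝ) ≤ C * √((p : ℝ) ^ k)) (n : ℕ) :
    (f n : ℝ) ≤ C ^ n.primeFactors.card * √n := by
  rcases eq_or_ne n 0 with rfl | hn
  · simp
  have hn_prod : (n : ℝ) = ∏ p ∈ n.primeFactors, (p : ℝ) ^ n.factorization p := by
    exact_mod_cast (Nat.prod_factorization_pow_eq_self hn).symm
  calc (f n : ℝ) = ∏ p ∈ n.primeFactors, (f (p ^ n.factorization p) : ℝ) := by
        rw [hf.multiplicative_factorization f hn, Finsupp.prod, Nat.support_factorization]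
        push_cast; rfl
    _ ≤ ∏ p ∈ n.primeFactors, C * √((p : ℝ) ^ n.factorization p) :=
        prod_le_prod (fun _ _ => by positivity) fun p hp =>
          h p _ (Nat.prime_of_mem_primeFactors hp)
            (Finsupp.mem_support_iff.mp (by rwa [Nat.support_factorization]))
    _ = C ^ n.primeFactors.card * √n := by
        rw [prod_mul_distrib, prod_const, hn_prod, Real.sqrt_prod _ fun _ _ => by positivity]

def totientGcdSum : ArithmeticFunction ℕ :=
  ⟨fun n => ∑ d ∈ n.divisors, φ (d.gcd (n / d)), by simp⟩

theorem totientGcdSum_apply (n : ℕ) :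
    totientGcdSum n = ∑ d ∈ n.divisors, φ (d.gcd (n / d)) := rfl

theorem isMultiplicative_totientGcdSum : totientGcdSum.IsMultiplicative := by
  refine ⟨by simp [totientGcdSum_apply], fun {m n} hmn => ?_⟩
  rw [totientGcdSum_apply, totientGcdSum_apply, totientGcdSum_apply, Nat.divisors_mul, mul_def,
    sum_image hmn.mul_injOn_divisors, sum_product, sum_mul_sum]
  refine sum_congr rfl fun a ha => sum_congr rfl fun b hb => ?_
  have ha : a ∣ m := Nat.dvd_of_mem_divisors ha
  have hb : b ∣ n := Nat.dvd_of_mem_divisors hb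
  rw [← Nat.div_mul_div_comm ha hb, Nat.gcd_mul_mul_of_coprime
    (by rwa [Nat.mul_div_cancel' ha, Nat.mul_div_cancel' hb]), Nat.totient_mul]
  exact (hmn.coprime_dvd_left ((a.gcd_dvd_left _).trans ha)).coprime_dvd_right
    ((b.gcd_dvd_left _).trans hb)

theorem totientGcdSum_prime_pow {p : ℕ} (hp : p.Prime) (k : ℕ) :
    totientGcdSum (p ^ k) = ∑ i ∈ range (k + 1), φ (p ^ min i (k - i)) := by
  rw [totientGcdSum_apply, Nat.sum_divisors_prime_pow hp]
  refine sum_congr rfl fun i hi => ?_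
  rw [Nat.pow_div (by rw [mem_range] at hi; omega) hp.pos, Nat.gcd_pow_pow]

theorem totientGcdSum_prime_pow_le {p : ℕ} (hp : p.Prime) (k : ℕ) :
    totientGcdSum (p ^ k) ≤ 2 * p ^ (k / 2) :=
  calc totientGcdSum (p ^ k) = ∑ i ∈ range (k + 1), φ (p ^ min i (k - i)) :=
        totientGcdSum_prime_pow hp k
    _ ≤ 2 • ∑ i ∈ range (k / 2 + 1), φ (p ^ i) := sum_range_min_sub_le (fun i => φ (p ^ i)) k
    _ = 2 * p ^ (k / 2) := by rw [smul_eq_mul, ← Nat.sum_divisors_prime_pow hp, Nat.sum_totient]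

theorem sum_totient_gcd_le_general (N : ℕ) :
    ((∑ d ∈ N.divisors, Nat.totient (Nat.gcd d (N / d)) : ℕ) : ℝ)
      ≤ 2 ^ N.primeFactors.card * Real.sqrt N := by
  refine isMultiplicative_totientGcdSum.cast_le_pow_card_primeFactors_mul_sqrt (C := 2)
    (fun p k hp _ => ?_) N
  calc ((totientGcdSum (p ^ k) : ℕ) : ℝ) ≤ ((2 * p ^ (k / 2) : ℕ) : ℝ) := by
        exact_mod_cast totientGcdSum_prime_pow_le hp k
    _ ≤ 2 * √((p : ℝ) ^ k) := by
        push_cast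
        gcongr
        exact Real.pow_div_two_le_sqrt_pow (by exact_mod_cast hp.one_le) k

theorem sum_totient_gcd_le (N : ℕ) (hN : 1 ≤ N) :
    ((∑ d ∈ N.divisors, Nat.totient (Nat.gcd d (N / d)) : ℕ) : ℝ)
      ≤ 2 ^ N.primeFactors.card * Real.sqrt N :=
  sum_totient_gcd_le_general N
end

section
/- Define Tr T_3(2k) = −(2/3)P_{2k}(0,3) − P_{2k}(1,3) − P_{2k}(2,3) − (1/3)P_{2k}(3,3) − 1, where P_{2k}(t,m) = (ρ^{2k−1} − ρ̄^{2k−1})/(ρ − ρ̄) with ρ + ρ̄ = t, ρρ̄ = m. Then (Tr T_3(2k))^2 < 22 · 9^{k−1} for all k ≥ 1. -/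
/-!
If `t² < 4m`, the roots of `x² - t x + m` are a pair `ρ, conj ρ` with `|ρ|² = m` and
`|ρ - conj ρ|² = 4m - t²`, so `|(ρⁿ - conj ρⁿ) / (ρ - conj ρ)|² ≤ 4 mⁿ / (4m - t²)`.
For `m = 3`, `n = 2k - 1` and `t = 0, 1, 2, 3` this bounds `|P t| / 3^(k-1)` by
`1, √(12/11) < 209/200, √(3/2) < 49/40, 2`; the triangle inequality then gives
`|Tr T₃| ≤ (1381/300) · 3^(k-1)`, and `(1381/300)² < 22`.
-/

open ComplexConjugate

namespace Complex

theorem sq_norm_sub_conj (ρ : ℂ) : ‖ρ - conj ρ‖ ^ 2 = 4 * ‖ρ‖ ^ 2 - (2 * ρ.re) ^ 2 := by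
  rw [sub_conj, norm_mul, norm_real, norm_I, mul_one, Real.norm_eq_abs, sq_abs]
  linear_combination -4 * sq_norm_sub_sq_re ρ

theorem norm_pow_sub_conj_pow_le (ρ : ℂ) (n : ℕ) : ‖ρ ^ n - conj ρ ^ n‖ ≤ 2 * ‖ρ‖ ^ n :=
  calc ‖ρ ^ n - conj ρ ^ n‖ ≤ ‖ρ ^ n‖ + ‖conj ρ ^ n‖ := norm_sub_le _ _
    _ = 2 * ‖ρ‖ ^ n := by rw [norm_pow, norm_pow, norm_conj]; ring

theorem exists_ne_conj_of_sq_lt {t m : ℝ} (h : t ^ 2 < 4 * m) :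
    ∃ ρ : ℂ, 2 * ρ.re = t ∧ ‖ρ‖ ^ 2 = m ∧ ρ ≠ conj ρ := by
  have hd : 0 < 4 * m - t ^ 2 := by linarith
  refine ⟨⟨t / 2, √(4 * m - t ^ 2) / 2⟩, by ring, ?_, fun hρ => ?_⟩
  · rw [Complex.sq_norm, normSq_mk, ← sq, ← sq, div_pow, div_pow, Real.sq_sqrt hd.le]
    ring
  · have him := conj_eq_iff_im.mp hρ.symm
    simp only at him
    have := Real.sqrt_pos.mpr hd
    linarith

end Complex

open Complex in
theorem sq_norm_mul_le_of_roots {t m : ℝ} (h : t ^ 2 < 4 * m) {x : ℂ} {n : ℕ}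
    (hx : ∀ ρ σ : ℂ, ρ + σ = t → ρ * σ = m → ρ ≠ σ → x = (ρ ^ n - σ ^ n) / (ρ - σ)) :
    ‖x‖ ^ 2 * (4 * m - t ^ 2) ≤ 4 * m ^ n := by
  obtain ⟨ρ, hre, hnorm, hne⟩ := exists_ne_conj_of_sq_lt h
  have hsum : ρ + conj ρ = t := by rw [add_conj, hre]
  have hprod : ρ * conj ρ = m := by rw [mul_conj, ← Complex.sq_norm, hnorm]
  have hden : ‖ρ - conj ρ‖ ≠ 0 := norm_ne_zero_iff.mpr (sub_ne_zero.mpr hne)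
  rw [hx ρ (conj ρ) hsum hprod hne, ← hre, ← hnorm, ← sq_norm_sub_conj, ← mul_pow,
    norm_div, div_mul_cancel₀ _ hden, ← pow_mul, mul_comm 2 n, pow_mul,
    show (4 : ℝ) = 2 ^ 2 by norm_num, ← mul_pow]
  gcongr
  exact norm_pow_sub_conj_pow_le ρ n

theorem norm_le_of_twelve_le_sq_mul {t q : ℝ} {x : ℂ} (k : ℕ)
    (hx : ∀ ρ σ : ℂ, ρ + σ = t → ρ * σ = 3 → ρ ≠ σ →
      x = (ρ ^ (2 * k - 1) - σ ^ (2 * k - 1)) / (ρ - σ))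
    (hq : 0 ≤ q) (hq12 : 12 ≤ q ^ 2 * (12 - t ^ 2)) :
    ‖x‖ ≤ q * 3 ^ (k - 1) := by
  have hd : 0 < 12 - t ^ 2 := by
    by_contra! hd
    nlinarith [sq_nonneg q]
  have hx2 := sq_norm_mul_le_of_roots (m := 3) (by linarith) (by exact_mod_cast hx)
  have hpow : (3 : ℝ) ^ (2 * k - 1) ≤ 3 * ((3 : ℝ) ^ (k - 1)) ^ 2 := by
    rw [← pow_mul, ← pow_succ']
    exact pow_le_pow_right₀ (by norm_num) (by omega)
  have hc : 0 ≤ ((3 : ℝ) ^ (k - 1)) ^ 2 := by positivity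
  rw [← sq_le_sq₀ (norm_nonneg x) (by positivity), ← mul_le_mul_iff_of_pos_right hd]
  nlinarith

theorem trace_T3_sq_bound_general (k : ℕ) (P : ℤ → ℂ)
    (hP : ∀ t : ℤ, ∀ ρ ρbar : ℂ, ρ + ρbar = (t : ℂ) → ρ * ρbar = (3 : ℂ) →
      ρ ≠ ρbar → P t = (ρ ^ (2 * k - 1) - ρbar ^ (2 * k - 1)) / (ρ - ρbar)) :
    ‖-(2 / 3) * P 0 - P 1 - P 2 - (1 / 3) * P 3 - 1‖ ^ 2
      < 22 * (9 : ℝ) ^ (k - 1) := by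
  set c : ℝ := 3 ^ (k - 1)
  have bound (t : ℤ) (q : ℝ) (hq : 0 ≤ q) (hq12 : 12 ≤ q ^ 2 * (12 - (t : ℝ) ^ 2)) :
      ‖P t‖ ≤ q * c :=
    norm_le_of_twelve_le_sq_mul k (by exact_mod_cast hP t) hq hq12
  have h0 := bound 0 1 (by norm_num) (by norm_num)
  have h1 := bound 1 (209 / 200) (by norm_num) (by norm_num)
  have h2 := bound 2 (49 / 40) (by norm_num) (by norm_num)
  have h3 := bound 3 2 (by norm_num) (by norm_num)
  have hc : 1 ≤ c := one_le_pow₀ (by norm_num)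
  have htrace : ‖-(2 / 3) * P 0 - P 1 - P 2 - (1 / 3) * P 3 - 1‖ ≤ 1381 / 300 * c :=
    calc ‖-(2 / 3) * P 0 - P 1 - P 2 - (1 / 3) * P 3 - 1‖
        ≤ ‖-(2 / 3) * P 0‖ + ‖P 1‖ + ‖P 2‖ + ‖(1 / 3) * P 3‖ + ‖(1 : ℂ)‖ := by
          grw [norm_sub_le, norm_sub_le, norm_sub_le, norm_sub_le]
      _ = 2 / 3 * ‖P 0‖ + ‖P 1‖ + ‖P 2‖ + 1 / 3 * ‖P 3‖ + 1 := by
          simp only [norm_mul, norm_neg, norm_div, norm_one, RCLike.norm_ofNat]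
      _ ≤ 1381 / 300 * c := by linarith
  have h9 : (9 : ℝ) ^ (k - 1) = c ^ 2 := by
    rw [← pow_mul, mul_comm, pow_mul]; norm_num
  rw [h9]
  calc _ ≤ (1381 / 300 * c) ^ 2 := by gcongr
    _ < 22 * c ^ 2 := by nlinarith

theorem trace_T3_sq_bound (k : ℕ) (hk : 1 ≤ k) (P : ℤ → ℂ)
    (hP : ∀ t : ℤ, ∀ ρ ρbar : ℂ, ρ + ρbar = (t : ℂ) → ρ * ρbar = (3 : ℂ) →
      ρ ≠ ρbar → P t = (ρ ^ (2 * k - 1) - ρbar ^ (2 * k - 1)) / (ρ - ρbar)) :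
    ‖-(2 / 3) * P 0 - P 1 - P 2 - (1 / 3) * P 3 - 1‖ ^ 2
      < 22 * (9 : ℝ) ^ (k - 1) :=
  trace_T3_sq_bound_general k P hP
end

section
/- Define C_k = −(5/4)P_{2k}(0,9) − 2P_{2k}(1,9) − 3P_{2k}(2,9) − (4/3)P_{2k}(3,9) − 2P_{2k}(4,9) − P_{2k}(5,9) − 1 − 3^{2k−1}/2, where P_{2k}(t,m) is the coefficient of x^{2k−2} in (1 − tx + mx^2)^{−1}. Then |C_k| < 15 · 9^{k−1} for all k ≥ 1. -/
/-! For |t| < 6 the roots of x² - t x + 9 are complex conjugates of modulus 3 at distance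
√(36 - t²), so |P_{2k}(t, 9)| ≤ 2 · 3^{2k-1} / √(36 - t²) by the triangle inequality. Summing these
bounds with the coefficients of C_k gives roughly 14.99 · 9^{k-1}, so three decimals of the square
roots √(36 - t²) are needed. -/

open ComplexConjugate

lemma pow_two_mul_sub_one {M : Type*} [Monoid M] (a : M) {k : ℕ} (hk : 1 ≤ k) :
    a ^ (2 * k - 1) = a * (a ^ 2) ^ (k - 1) := by
  rw [← pow_mul, ← pow_succ']; congr 1; omega

lemma norm_pow_sub_pow_div_sub_le {𝕜 : Type*} [NormedField 𝕜] {a b : 𝕜} {r : ℝ}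
    (ha : ‖a‖ ≤ r) (hb : ‖b‖ ≤ r) (n : ℕ) :
    ‖(a ^ n - b ^ n) / (a - b)‖ ≤ 2 * r ^ n / ‖a - b‖ := by
  have hr : 0 ≤ r := (norm_nonneg a).trans ha
  rw [norm_div]
  gcongr
  calc ‖a ^ n - b ^ n‖ ≤ ‖a‖ ^ n + ‖b‖ ^ n := by
        simpa only [norm_pow] using norm_sub_le (a ^ n) (b ^ n)
    _ ≤ r ^ n + r ^ n := by gcongr
    _ = 2 * r ^ n := by ring

lemma Complex.exists_add_conj_mul_conj_of_sq_lt {t m : ℝ} (h : t ^ 2 < 4 * m) :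
    ∃ ρ : ℂ, ρ + conj ρ = t ∧ ρ * conj ρ = m ∧ ‖ρ‖ ^ 2 = m ∧
      ‖ρ - conj ρ‖ = √(4 * m - t ^ 2) := by
  set s := √(4 * m - t ^ 2)
  have hs : s ^ 2 = 4 * m - t ^ 2 := Real.sq_sqrt (by linarith)
  have hnormSq : Complex.normSq ⟨t / 2, s / 2⟩ = m := by
    rw [Complex.normSq_mk]; linear_combination hs / 4
  refine ⟨⟨t / 2, s / 2⟩, ?_, ?_, ?_, ?_⟩
  · rw [Complex.add_conj]; push_cast; ring
  · rw [Complex.mul_conj, hnormSq]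
  · rw [Complex.sq_norm, hnormSq]
  · rw [Complex.sub_conj, norm_mul, Complex.norm_I, Complex.norm_real, Real.norm_eq_abs,
      abs_of_nonneg (by positivity)]
    ring

lemma norm_le_of_eq_pow_sub_pow_div_sub {n : ℕ} {P : ℤ → ℂ}
    (hP : ∀ t : ℤ, ∀ ρ ρbar : ℂ, ρ + ρbar = (t : ℂ) → ρ * ρbar = (9 : ℂ) →
      ρ ≠ ρbar → P t = (ρ ^ n - ρbar ^ n) / (ρ - ρbar))
    (t : ℤ) {q : ℝ} (hq : 0 < q) (hqt : (t : ℝ) ^ 2 + q ^ 2 ≤ 36) :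
    ‖P t‖ ≤ 2 * 3 ^ n / q := by
  obtain ⟨ρ, hsum, hprod, hnorm, hdiff⟩ :=
    Complex.exists_add_conj_mul_conj_of_sq_lt (t := t) (m := 9) (by nlinarith)
  have hq_le : q ≤ ‖ρ - conj ρ‖ := by
    rw [hdiff, Real.le_sqrt' hq]; linarith
  have hρ : ‖ρ‖ = 3 := by nlinarith [norm_nonneg ρ]
  rw [hP t ρ (conj ρ) (by exact_mod_cast hsum) (by exact_mod_cast hprod)
    (sub_ne_zero.mp (norm_pos_iff.mp (hq.trans_le hq_le)))]
  calc _ ≤ 2 * 3 ^ n / ‖ρ - conj ρ‖ :=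
        norm_pow_sub_pow_div_sub_le hρ.le ((Complex.norm_conj ρ).trans hρ).le n
    _ ≤ 2 * 3 ^ n / q := by gcongr

theorem trace_T9_error_bound (k : ℕ) (hk : 1 ≤ k) (P : ℤ → ℂ)
    (hP : ∀ t : ℤ, ∀ ρ ρbar : ℂ, ρ + ρbar = (t : ℂ) → ρ * ρbar = (9 : ℂ) →
      ρ ≠ ρbar → P t = (ρ ^ (2 * k - 1) - ρbar ^ (2 * k - 1)) / (ρ - ρbar)) :
    ‖(-(5 / 4) * P 0 - 2 * P 1 - 3 * P 2 - (4 / 3) * P 3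
        - 2 * P 4 - P 5 - 1 - (3 : ℂ) ^ (2 * k - 1) / 2)‖
      < 15 * (9 : ℝ) ^ (k - 1) := by
  set B : ℝ := 9 ^ (k - 1)
  have hB : 1 ≤ B := one_le_pow₀ (by norm_num)
  have h_pow : (3 : ℝ) ^ (2 * k - 1) = 3 * B := by norm_num [pow_two_mul_sub_one _ hk, B]
  have bound (t : ℤ) (c : ℂ) {q : ℝ} (hq : 0 < q) (hqt : (t : ℝ) ^ 2 + q ^ 2 ≤ 36) :
      ‖c * P t‖ ≤ ‖c‖ * (6 * B / q) := by
    rw [norm_mul]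
    gcongr
    exact (norm_le_of_eq_pow_sub_pow_div_sub hP t hq hqt).trans_eq (by rw [h_pow]; ring)
  have h0 := bound 0 (-(5 / 4)) (q := 6) (by norm_num) (by norm_num)
  have h1 := bound 1 2 (q := 5916 / 1000) (by norm_num) (by norm_num)
  have h2 := bound 2 3 (q := 5656 / 1000) (by norm_num) (by norm_num)
  have h3 := bound 3 (4 / 3) (q := 5196 / 1000) (by norm_num) (by norm_num)
  have h4 := bound 4 2 (q := 4472 / 1000) (by norm_num) (by norm_num)
  have h5 := bound 5 1 (q := 3316 / 1000) (by norm_num) (by norm_num)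
  have h_three : ‖(3 : ℂ) ^ (2 * k - 1) / 2‖ = 3 * B / 2 := by
    rw [norm_div, norm_pow, ← h_pow]; norm_num
  rw [one_mul, norm_one, one_mul] at h5
  calc _ ≤ ‖-(5 / 4) * P 0‖ + ‖2 * P 1‖ + ‖3 * P 2‖ + ‖(4 / 3) * P 3‖ + ‖2 * P 4‖ + ‖P 5‖
        + ‖(1 : ℂ)‖ + ‖(3 : ℂ) ^ (2 * k - 1) / 2‖ := by
        repeat refine (norm_sub_le _ _).trans (add_le_add_left ?_ _)
        exact le_rfl
    _ ≤ ‖-(5 / 4 : ℂ)‖ * (6 * B / 6) + ‖(2 : ℂ)‖ * (6 * B / (5916 / 1000))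
        + ‖(3 : ℂ)‖ * (6 * B / (5656 / 1000)) + ‖(4 / 3 : ℂ)‖ * (6 * B / (5196 / 1000))
        + ‖(2 : ℂ)‖ * (6 * B / (4472 / 1000)) + 6 * B / (3316 / 1000) + 1 + 3 * B / 2 := by
        rw [norm_one, h_three]; gcongr
    _ < 15 * B := by norm_num; linarith
end

section
/- Define D_k = −(3/4)P_{2k}(0,4) − 2P_{2k}(1,4) − (4/3)P_{2k}(2,4) − P_{2k}(3,4) − 2^{2k−1} − 1, where P_{2k}(t,m) is the coefficient of x^{2k−2} in (1 − tx + mx^2)^{−1}. Then |D_k| < 9 · 4^{k−1} for all k ≥ 1. -/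
/-!
If `t ^ 2 < 4 m`, the roots of `x ^ 2 - t x + m` are a complex-conjugate pair `z, conj z` with
`‖z‖ = √m` and `z - conj z = i √(4 m - t ^ 2)`, so `(z ^ n - conj z ^ n) / (z - conj z)` has norm at
most `2 √m ^ n / √(4 m - t ^ 2)`. For `m = 4` and `t = 0, 1, 2, 3` the four values of `P` are thus
bounded by `2 ^ (2k - 1)` times `1/2, 2/√15, 2/√12, 2/√7`, which makes `|D_k| ≤ 3.94 · 2 ^ (2k - 1) + 1`.
-/

open ComplexConjugate

theorem Complex.norm_pow_sub_conj_pow_div_sub_conj_le (z : ℂ) (n : ℕ) :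
    ‖(z ^ n - conj z ^ n) / (z - conj z)‖ ≤ ‖z‖ ^ n / |z.im| := by
  have hden : ‖z - conj z‖ = 2 * |z.im| := by
    rw [Complex.sub_conj, norm_mul, Complex.norm_I, Complex.norm_real, Real.norm_eq_abs, abs_mul,
      abs_two, mul_one]
  have hnum : ‖z ^ n - conj z ^ n‖ ≤ 2 * ‖z‖ ^ n := by
    calc ‖z ^ n - conj z ^ n‖ ≤ ‖z ^ n‖ + ‖conj z ^ n‖ := norm_sub_le _ _
      _ = 2 * ‖z‖ ^ n := by rw [norm_pow, norm_pow, Complex.norm_conj]; ring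
  rw [norm_div, hden]
  calc ‖z ^ n - conj z ^ n‖ / (2 * |z.im|) ≤ 2 * ‖z‖ ^ n / (2 * |z.im|) :=
        div_le_div_of_nonneg_right hnum (by positivity)
    _ = ‖z‖ ^ n / |z.im| := by rw [mul_div_mul_left _ _ two_ne_zero]

theorem norm_le_of_eq_at_conjugate_roots {m t s : ℝ} {n : ℕ} {w : ℂ}
    (hw : ∀ ρ ρbar : ℂ, ρ + ρbar = t → ρ * ρbar = m → ρ ≠ ρbar →
      w = (ρ ^ n - ρbar ^ n) / (ρ - ρbar))
    (hs : 0 < s) (hst : s ^ 2 ≤ 4 * m - t ^ 2) :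
    ‖w‖ ≤ 2 * √m ^ n / s := by
  set z : ℂ := ⟨t / 2, √(4 * m - t ^ 2) / 2⟩
  have hs_le : s ≤ √(4 * m - t ^ 2) := (Real.le_sqrt hs.le (by nlinarith)).2 hst
  have him : s / 2 ≤ |z.im| := by
    rw [abs_of_nonneg (by positivity : 0 ≤ √(4 * m - t ^ 2) / 2)]; linarith
  have hnormSq : Complex.normSq z = m := by
    rw [Complex.normSq_mk]
    nlinarith [Real.sq_sqrt (by nlinarith : 0 ≤ 4 * m - t ^ 2)]
  have hne : z ≠ conj z := fun h => by
    have := congrArg Complex.im h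
    simp only [Complex.conj_im, z] at this
    linarith
  have hsum : z + conj z = t := by rw [Complex.add_conj]; simp only [z]; push_cast; ring
  rw [hw z (conj z) hsum (by rw [Complex.mul_conj, hnormSq]) hne]
  calc _ ≤ ‖z‖ ^ n / |z.im| := z.norm_pow_sub_conj_pow_div_sub_conj_le n
    _ ≤ ‖z‖ ^ n / (s / 2) := by gcongr
    _ = 2 * √m ^ n / s := by rw [Complex.norm_def, hnormSq]; field_simp

theorem norm_weighted_sub_le (a b c d e : ℂ) :
    ‖-(3 / 4) * a - 2 * b - (4 / 3) * c - d - e - 1‖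
      ≤ 3 / 4 * ‖a‖ + 2 * ‖b‖ + 4 / 3 * ‖c‖ + ‖d‖ + ‖e‖ + 1 := by
  have hweights : ‖-(3 / 4) * a‖ = 3 / 4 * ‖a‖ ∧ ‖2 * b‖ = 2 * ‖b‖ ∧
      ‖(4 / 3) * c‖ = 4 / 3 * ‖c‖ := by
    simp only [norm_mul, norm_neg, norm_div, Complex.norm_ofNat]
    norm_num
  linarith [norm_sub_le (-(3 / 4) * a - 2 * b - (4 / 3) * c - d - e) 1,
    norm_sub_le (-(3 / 4) * a - 2 * b - (4 / 3) * c - d) e,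
    norm_sub_le (-(3 / 4) * a - 2 * b - (4 / 3) * c) d,
    norm_sub_le (-(3 / 4) * a - 2 * b) ((4 / 3) * c),
    norm_sub_le (-(3 / 4) * a) (2 * b), norm_one (α := ℂ)]

theorem two_pow_two_mul_sub_one_le (k : ℕ) : (2 : ℝ) ^ (2 * k - 1) ≤ 2 * 4 ^ (k - 1) :=
  calc (2 : ℝ) ^ (2 * k - 1) ≤ 2 ^ (2 * (k - 1) + 1) := pow_le_pow_right₀ one_le_two (by omega)
    _ = 2 * 4 ^ (k - 1) := by rw [pow_succ, pow_mul]; norm_num; ring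

theorem trace_T4_error_bound_general (k : ℕ) (P : ℤ → ℂ)
    (hP : ∀ t : ℤ, ∀ ρ ρbar : ℂ, ρ + ρbar = (t : ℂ) → ρ * ρbar = (4 : ℂ) →
      ρ ≠ ρbar → P t = (ρ ^ (2 * k - 1) - ρbar ^ (2 * k - 1)) / (ρ - ρbar)) :
    ‖(-(3 / 4) * P 0 - 2 * P 1 - (4 / 3) * P 2 - P 3
        - (2 : ℂ) ^ (2 * k - 1) - 1)‖
      < 9 * (4 : ℝ) ^ (k - 1) := by
  set X : ℝ := 2 ^ (2 * k - 1)
  have hP_le (t : ℤ) {s : ℝ} (hs : 0 < s) (hst : s ^ 2 ≤ 16 - t ^ 2) : ‖P t‖ ≤ 2 * X / s := by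
    have h := norm_le_of_eq_at_conjugate_roots (m := 4) (fun ρ ρbar h₁ h₂ =>
      hP t ρ ρbar (by exact_mod_cast h₁) (by exact_mod_cast h₂)) hs (by linarith)
    rwa [show √(4 : ℝ) = 2 by rw [show (4 : ℝ) = 2 ^ 2 by norm_num, Real.sqrt_sq two_pos.le]] at h
  -- `s` runs through rational lower bounds for `√(16 - t ^ 2)`
  have h0 := hP_le 0 (s := 4) (by norm_num) (by norm_num)
  have h1 := hP_le 1 (s := 387 / 100) (by norm_num) (by norm_num)
  have h2 := hP_le 2 (s := 346 / 100) (by norm_num) (by norm_num)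
  have h3 := hP_le 3 (s := 264 / 100) (by norm_num) (by norm_num)
  have hpow : ‖(2 : ℂ) ^ (2 * k - 1)‖ = X := by simp [X]
  have htri := norm_weighted_sub_le (P 0) (P 1) (P 2) (P 3) ((2 : ℂ) ^ (2 * k - 1))
  norm_num at h0 h1 h2 h3
  linarith [two_pow_two_mul_sub_one_le k, one_le_pow₀ (n := k - 1) (by norm_num : (1 : ℝ) ≤ 4)]

theorem trace_T4_error_bound (k : ℕ) (hk : 1 ≤ k) (P : ℤ → ℂ)
    (hP : ∀ t : ℤ, ∀ ρ ρbar : ℂ, ρ + ρbar = (t : ℂ) → ρ * ρbar = (4 : ℂ) →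
      ρ ≠ ρbar → P t = (ρ ^ (2 * k - 1) - ρbar ^ (2 * k - 1)) / (ρ - ρbar)) :
    ‖(-(3 / 4) * P 0 - 2 * P 1 - (4 / 3) * P 2 - P 3
        - (2 : ℂ) ^ (2 * k - 1) - 1)‖
      < 9 * (4 : ℝ) ^ (k - 1) :=
  trace_T4_error_bound_general k P hP
end
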